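/- arXiv:2009.02478 — 6 statements merged into one kernel-verified Lean document; each statement's English description precedes it below -/
import Mathlib

section
/- If T ≤ 0 or L ≥ 0 (with T = 1-A+M, L = A(M+1)-Q-M, A > 0, M < 0, Q > 0), then the cubic g(u) = u^3 - T u^2 - L u + A M has exactly one positive real root. -/
/-!
For `c < 0` the cubic `g u = u ^ 3 - T u ^ 2 - L u + c` is negative at `0` and tends to `+∞`, so it
has a positive root. A positive root of `g` is a root of `g u / u ^ n` for any `n`; if `T ≤ 0` then
`g u / u = u ^ 2 - T u - L + c / u` is strictly increasing on `u > 0`, and if `0 ≤ L` then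
`g u / u ^ 2 = u - T - L / u + c / u ^ 2` is, so in either case the positive root is unique.
-/

open Set

theorem Set.Subsingleton.of_strictMonoOn_div_pow {f : ℝ → ℝ} {n : ℕ}
    (hf : StrictMonoOn (fun u => f u / u ^ n) (Ioi 0)) : {u | 0 < u ∧ f u = 0}.Subsingleton := by
  rintro a ⟨ha, hfa⟩ b ⟨hb, hfb⟩
  exact hf.injOn ha hb (by simp only [hfa, hfb, zero_div])

section Cubic

variable (T L : ℝ) {c : ℝ}

theorem exists_pos_cubic_root (hc : c < 0) :
    ∃ u, 0 < u ∧ u ^ 3 - T * u ^ 2 - L * u + c = 0 := by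
  set R : ℝ := 1 + |T| + |L| + |c|
  have hR : 1 ≤ R := by linarith [abs_nonneg T, abs_nonneg L, abs_nonneg c]
  have hR_root : 0 < R ^ 3 - T * R ^ 2 - L * R + c := by
    nlinarith [abs_nonneg T, abs_nonneg L, abs_nonneg c, le_abs_self T, le_abs_self L,
      neg_abs_le c, mul_le_mul_of_nonneg_left (le_abs_self T) (sq_nonneg R), sq_nonneg (R - 1)]
  have hcont : ContinuousOn (fun u : ℝ => u ^ 3 - T * u ^ 2 - L * u + c) (Icc 0 R) := by
    fun_prop
  obtain ⟨u, hu, hroot⟩ := intermediate_value_Ioo (by linarith) hcont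
    (show (0 : ℝ) ∈ Ioo (0 ^ 3 - T * 0 ^ 2 - L * 0 + c) _ by simpa using ⟨hc, hR_root⟩)
  exact ⟨u, hu.1, hroot⟩

theorem strictMonoOn_cubic_div (hT : T ≤ 0) (hc : c < 0) :
    StrictMonoOn (fun u : ℝ => (u ^ 3 - T * u ^ 2 - L * u + c) / u ^ 1) (Ioi 0) := by
  intro a (ha : 0 < a) b (hb : 0 < b) hab
  simp only [pow_one]
  rw [div_lt_div_iff₀ ha hb]
  have hpos : 0 < a * b * (a + b - T) - c := by
    nlinarith [mul_pos (mul_pos ha hb) (show 0 < a + b - T by linarith)]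
  nlinarith [mul_pos hpos (sub_pos.mpr hab)]

theorem strictMonoOn_cubic_div_sq (hL : 0 ≤ L) (hc : c < 0) :
    StrictMonoOn (fun u : ℝ => (u ^ 3 - T * u ^ 2 - L * u + c) / u ^ 2) (Ioi 0) := by
  intro a (ha : 0 < a) b (hb : 0 < b) hab
  simp only
  rw [div_lt_div_iff₀ (by positivity) (by positivity)]
  have hpos : 0 < a ^ 2 * b ^ 2 + L * a * b - c * (a + b) := by
    nlinarith [mul_pos (mul_pos ha ha) (mul_pos hb hb), mul_nonneg (mul_nonneg hL ha.le) hb.le,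
      mul_pos ha hb]
  nlinarith [mul_pos hpos (sub_pos.mpr hab)]

end Cubic

theorem stmt_1_general (A M : ℝ) (hA : 0 < A) (hM : M < 0)
    (T L : ℝ)
    (g : ℝ → ℝ) (hg : ∀ u, g u = u ^ 3 - T * u ^ 2 - L * u + A * M)
    (hcase : T ≤ 0 ∨ 0 ≤ L) :
    ∃! u : ℝ, 0 < u ∧ g u = 0 := by
  have hc : A * M < 0 := mul_neg_of_pos_of_neg hA hM
  obtain rfl : g = fun u => u ^ 3 - T * u ^ 2 - L * u + A * M := funext hg
  have hunique : {u | 0 < u ∧ u ^ 3 - T * u ^ 2 - L * u + A * M = 0}.Subsingleton := by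
    rcases hcase with hT | hL
    · exact .of_strictMonoOn_div_pow (strictMonoOn_cubic_div T L hT hc)
    · exact .of_strictMonoOn_div_pow (strictMonoOn_cubic_div_sq T L hL hc)
  obtain ⟨u, hu⟩ := exists_pos_cubic_root T L hc
  exact ⟨u, hu, fun v hv => hunique hv hu⟩

/-- if T ≤ 0 or L ≥ 0 then g has exactly one positive real root. -/
theorem stmt_1 (A M Q : ℝ) (hA : 0 < A) (hA1 : A < 1) (hM : M < 0) (hQ : 0 < Q)
    (T L : ℝ) (hT : T = 1 - A + M) (hL : L = A * (M + 1) - Q - M)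
    (g : ℝ → ℝ) (hg : ∀ u, g u = u ^ 3 - T * u ^ 2 - L * u + A * M)
    (hcase : T ≤ 0 ∨ 0 ≤ L) :
    ∃! u : ℝ, 0 < u ∧ g u = 0 :=
  stmt_1_general A M hA hM T L g hg hcase
end

section
/- All positive real roots of the cubic g(u) = u^3 - T u^2 - L u + A M lie in the open interval (0,1), assuming 0 < A < 1, M < 0, Q > 0, T = 1-A+M, L = A(M+1)-Q-M. -/
/-! Without the `Q u` term the cubic vanishes at `u = 1`, and it factors as
`g u = (u - 1) (u + A) (u - M) + Q u`. For `u ≥ 1` every factor of the product is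
nonnegative and `Q u > 0`, so `g` has no root in `[1, ∞)`. -/

lemma cubic_eq_factored (A M Q u : ℝ) :
    u ^ 3 - (1 - A + M) * u ^ 2 - (A * (M + 1) - Q - M) * u + A * M
      = (u - 1) * (u + A) * (u - M) + Q * u := by
  ring

lemma factored_cubic_pos_of_one_le {A M Q u : ℝ} (hA : -1 ≤ A) (hM : M ≤ 1) (hQ : 0 < Q)
    (hu : 1 ≤ u) : 0 < (u - 1) * (u + A) * (u - M) + Q * u := by
  have hprod : 0 ≤ (u - 1) * (u + A) * (u - M) := by
    apply mul_nonneg (mul_nonneg _ _) _ <;> linarith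
  have hQu : 0 < Q * u := mul_pos hQ (by linarith)
  linarith

theorem stmt_2_general (A M Q : ℝ) (hA : 0 < A) (hM : M < 0) (hQ : 0 < Q)
    (T L : ℝ) (hT : T = 1 - A + M) (hL : L = A * (M + 1) - Q - M)
    (g : ℝ → ℝ) (hg : ∀ u, g u = u ^ 3 - T * u ^ 2 - L * u + A * M) :
    ∀ u : ℝ, 0 < u → g u = 0 → u < 1 := by
  intro u _ hgu
  by_contra! hu
  rw [hg, hT, hL, cubic_eq_factored] at hgu
  have hpos := factored_cubic_pos_of_one_le (A := A) (M := M) (by linarith) (by linarith) hQ hu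
  exact hpos.ne' hgu

/-- all positive roots of g lie in (0,1). -/
theorem stmt_2 (A M Q : ℝ) (hA : 0 < A) (hA1 : A < 1) (hM : M < 0) (hQ : 0 < Q)
    (T L : ℝ) (hT : T = 1 - A + M) (hL : L = A * (M + 1) - Q - M)
    (g : ℝ → ℝ) (hg : ∀ u, g u = u ^ 3 - T * u ^ 2 - L * u + A * M) :
    ∀ u : ℝ, 0 < u → g u = 0 → u < 1 :=
  stmt_2_general A M Q hA hM hQ T L hT hL g hg
end

section
/- Under the hypotheses 0 < A < 1, M < 0, Q > 0, T = 1-A+M > 0, L = A(M+1)-Q-M < 0, the cubic g(u) = u^3 - T u^2 - L u + AM is strictly increasing on (-∞, 0] and on [T, ∞); consequently every real root of g lies in the open interval (0, 1). -/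
/-- g is strictly increasing on (-∞,0] and on [T,∞), and every real root of g
lies in the open interval (0,1). -/
theorem stmt_4 (A M Q : ℝ) (hA : 0 < A) (hA1 : A < 1) (hM : M < 0) (hQ : 0 < Q)
    (T L : ℝ) (hT : T = 1 - A + M) (hL : L = A * (M + 1) - Q - M)
    (hTpos : 0 < T) (hT1 : T < 1) (hLneg : L < 0)
    (g : ℝ → ℝ) (hg : ∀ u, g u = u ^ 3 - T * u ^ 2 - L * u + A * M) :
    StrictMonoOn g (Set.Iic 0) ∧ StrictMonoOn g (Set.Ici T) ∧
    ∀ u : ℝ, g u = 0 → 0 < u ∧ u < 1 := by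
  refine ⟨?_, ?_, ?_⟩
  · intro a ha b hb hab
    simp only [Set.mem_Iic] at ha hb
    rw [hg a, hg b]
    nlinarith [mul_pos (sub_pos.mpr hab) (neg_pos.mpr hLneg),
      mul_nonneg (sub_pos.mpr hab).le (sq_nonneg (a + b)),
      mul_nonneg (sub_pos.mpr hab).le (sq_nonneg (a - b)),
      mul_nonneg (mul_nonneg (sub_pos.mpr hab).le
        (neg_nonneg.mpr (by linarith : a + b ≤ 0))) hTpos.le]
  · intro a ha b hb hab
    simp only [Set.mem_Ici] at ha hb
    have ha0 : 0 < a := lt_of_lt_of_le hTpos ha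
    have hb0 : 0 < b := lt_of_lt_of_le hTpos hb
    rw [hg a, hg b]
    nlinarith [mul_pos (sub_pos.mpr hab) (neg_pos.mpr hLneg),
      mul_nonneg (sub_pos.mpr hab).le (mul_nonneg ha0.le (sub_nonneg.mpr ha)),
      mul_nonneg (sub_pos.mpr hab).le (mul_nonneg hb0.le (sub_nonneg.mpr hb)),
      mul_pos (sub_pos.mpr hab) (mul_pos ha0 hb0)]
  · intro u hu
    rw [hg u] at hu
    have hAM : A * M < 0 := mul_neg_of_pos_of_neg hA hM
    constructor
    · by_contra h
      push_neg at h
      nlinarith [mul_nonneg (neg_nonneg.mpr hLneg.le) (neg_nonneg.mpr h),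
        mul_nonpos_of_nonneg_of_nonpos (sq_nonneg u) h,
        mul_nonneg hTpos.le (sq_nonneg u)]
    · by_contra h
      push_neg at h
      have h1 : (0:ℝ) ≤ u - 1 := by linarith
      nlinarith [mul_nonneg h1 (mul_nonneg (by linarith : (0:ℝ) ≤ u) (by linarith : 0 ≤ u - T)),
        mul_nonneg h1 (by linarith : (0:ℝ) ≤ 1 - T),
        mul_nonneg h1 (neg_nonneg.mpr hLneg.le),
        mul_nonneg h1 (by linarith : (0:ℝ) ≤ u)]
end

section
/- For the blown-up system, the Jacobian at the origin O = (0,0) is diag(AS, -AS), and the Jacobian at I_x = (S/(S+M), 0) (assuming S > -M > 0) is upper triangular with diagonal entries -AS and -AMS/(M+S); since M < 0 and S + M > 0, the second diagonal entry -AMS/(M+S) is positive, so both equilibria are saddle points. -/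
/-!
Along the `x`-axis the first component restricts to the quadratic `A S x - A (S + M) x²`, whose
roots are the two equilibria `0` and `S / (S + M)`, while the second component vanishes there.
The `y`-derivative of the second component at `(c, 0)` is `A S (c - 1)`; at `c = S / (S + M)` this
is `-A M S / (M + S)`, positive because `M < 0 < S + M`.
-/

theorem deriv_quadratic {𝕜 : Type*} [NontriviallyNormedField 𝕜] (a b c x : 𝕜) :
    deriv (fun t => a * t ^ 2 + b * t + c) x = 2 * a * x + b := by
  have h : HasDerivAt (fun t => a * t ^ 2 + b * t + c) (a * (2 * x) + b * 1) x := by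
    simpa using
      (((hasDerivAt_pow 2 x).const_mul a).add ((hasDerivAt_id' x).const_mul b)).add_const c
  rw [h.deriv]
  ring

namespace BlownUpSystem

variable (A M Q S : ℝ)

def field₁ (x y : ℝ) : ℝ :=
  x * (S * (1 - x) * (A + x * y) + x * (M - x * y) * (x * y - 1) * (A + x * y) - Q * x * y)

def field₂ (x y : ℝ) : ℝ := S * y * (x - 1) * (x * y + A)

theorem deriv_field₁_xAxis (p : ℝ) :
    deriv (fun x => field₁ A M Q S x 0) p = A * S - 2 * A * (S + M) * p := by
  have h : (fun x => field₁ A M Q S x 0) = fun x => -(A * (S + M)) * x ^ 2 + A * S * x + 0 := by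
    funext x; simp only [field₁]; ring
  rw [h, deriv_quadratic]
  ring

theorem field₁_yAxis (y : ℝ) : field₁ A M Q S 0 y = 0 := by
  simp [field₁]

theorem field₂_xAxis (x : ℝ) : field₂ A S x 0 = 0 := by
  simp [field₂]

theorem deriv_field₂_vertical (c : ℝ) :
    deriv (fun y => field₂ A S c y) 0 = A * S * (c - 1) := by
  have h : (fun y => field₂ A S c y) =
      fun y => S * (c - 1) * c * y ^ 2 + A * S * (c - 1) * y + 0 := by
    funext y; simp only [field₂]; ring
  rw [h, deriv_quadratic]
  ring

end BlownUpSystem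

open BlownUpSystem in
theorem stmt_15_general (A M Q S : ℝ) (hA : 0 < A) (hM : M < 0) (hS : 0 < S)
    (hSM : S > -M)
    (G₁ G₂ : ℝ → ℝ → ℝ)
    (hG₁ : ∀ x y, G₁ x y =
      x * (S * (1 - x) * (A + x * y) + x * (M - x * y) * (x * y - 1) * (A + x * y) - Q * x * y))
    (hG₂ : ∀ x y, G₂ x y = S * y * (x - 1) * (x * y + A))
    (μ : ℝ) (hμ : μ = S / (S + M)) :
    (!![deriv (fun x => G₁ x 0) 0, deriv (fun y => G₁ 0 y) 0;
        deriv (fun x => G₂ x 0) 0, deriv (fun y => G₂ 0 y) 0] =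
      !![A * S, 0; 0, -(A * S)]) ∧
    0 < A * S ∧ -(A * S) < 0 ∧
    deriv (fun x => G₂ x 0) μ = 0 ∧
    deriv (fun x => G₁ x 0) μ = -(A * S) ∧
    deriv (fun y => G₂ μ y) 0 = -(A * M * S / (M + S)) ∧
    0 < -(A * M * S / (M + S)) := by
  obtain rfl : G₁ = field₁ A M Q S := funext₂ hG₁
  obtain rfl : G₂ = field₂ A S := funext₂ hG₂
  have hMS : 0 < M + S := by linarith
  have hAS : 0 < A * S := mul_pos hA hS
  simp only [deriv_field₁_xAxis, field₁_yAxis, field₂_xAxis, deriv_field₂_vertical, deriv_const]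
  subst hμ
  have hSM_ne : S + M ≠ 0 := by linarith
  refine ⟨by ext i j; fin_cases i <;> fin_cases j <;> simp, hAS, neg_neg_of_pos hAS, trivial,
    ?_, ?_, ?_⟩
  · field_simp; ring
  · rw [add_comm M S]; field_simp; ring
  · have hAMS : A * M * S < 0 := mul_neg_of_neg_of_pos (mul_neg_of_pos_of_neg hA hM) hS
    exact neg_pos.mpr (div_neg_of_neg_of_pos hAMS hMS)

/-- for the blown-up system, the Jacobian at the origin is diag(AS, -AS) and
the Jacobian at I_x = (S/(S+M), 0) is upper triangular with diagonal entries -AS and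
-AMS/(M+S) > 0, so both equilibria are saddle points. -/
theorem stmt_15 (A M Q S : ℝ) (hA : 0 < A) (hM : M < 0) (hQ : 0 < Q) (hS : 0 < S)
    (hSM : S > -M)
    (G₁ G₂ : ℝ → ℝ → ℝ)
    (hG₁ : ∀ x y, G₁ x y =
      x * (S * (1 - x) * (A + x * y) + x * (M - x * y) * (x * y - 1) * (A + x * y) - Q * x * y))
    (hG₂ : ∀ x y, G₂ x y = S * y * (x - 1) * (x * y + A))
    (μ : ℝ) (hμ : μ = S / (S + M)) :
    (!![deriv (fun x => G₁ x 0) 0, deriv (fun y => G₁ 0 y) 0;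
        deriv (fun x => G₂ x 0) 0, deriv (fun y => G₂ 0 y) 0] =
      !![A * S, 0; 0, -(A * S)]) ∧
    0 < A * S ∧ -(A * S) < 0 ∧
    deriv (fun x => G₂ x 0) μ = 0 ∧
    deriv (fun x => G₁ x 0) μ = -(A * S) ∧
    deriv (fun y => G₂ μ y) 0 = -(A * M * S / (M + S)) ∧
    0 < -(A * M * S / (M + S)) :=
  stmt_15_general A M Q S hA hM hS hSM G₁ G₂ hG₁ hG₂ μ hμ
end

section
/- If Δ > 0 with roots ordered so u* is the largest root, i.e. 0 < u*_- < u*_+ < u*, then at u*_- the quantity (u*_-)^2(2u*_- - T) - AM equals u*_- √Δ (u* - u*_-) which is strictly positive; hence the smallest of three distinct positive roots never yields a saddle (negative-determinant) equilibrium. -/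
/-!
With g(x) = x³ - T x² - L x + AM, one has v² (2v - T) - AM = v g'(v) - g(v). Dividing g by x - u*
leaves a quadratic with roots v = u*₋ and w = u*₊, where w - v = √Δ, so for v = u*₋ the expression
is v g'(v) = v (v - u*) (v - w) = v √Δ (u* - v), a product of three positive factors.
-/

theorem sq_mul_two_mul_sub_sub_eq_of_cubic_root {T L c u s v : ℝ}
    (hu : u ^ 3 - T * u ^ 2 - L * u + c = 0)
    (hs : s ^ 2 = (u - T) ^ 2 - 4 * (u * (u - T) - L))
    (hv : v = (T - u - s) / 2) :
    v ^ 2 * (2 * v - T) - c = v * s * (u - v) := by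
  subst hv
  linear_combination (u / 4) * hs - hu

theorem stmt_17_general (T L A M ustar : ℝ)
    (hroot : ustar ^ 3 - T * ustar ^ 2 - L * ustar + A * M = 0)
    (Δ : ℝ) (hΔdef : Δ = (ustar - T) ^ 2 - 4 * (ustar * (ustar - T) - L)) (hΔ : 0 < Δ)
    (um up : ℝ)
    (hum : um = (T - ustar - Real.sqrt Δ) / 2)
    (h0 : 0 < um) (h1 : um < up) (h2 : up < ustar) :
    um ^ 2 * (2 * um - T) - A * M = um * Real.sqrt Δ * (ustar - um) ∧
    0 < um ^ 2 * (2 * um - T) - A * M := by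
  have hsq : Real.sqrt Δ ^ 2 = (ustar - T) ^ 2 - 4 * (ustar * (ustar - T) - L) := by
    rw [Real.sq_sqrt hΔ.le, hΔdef]
  have heq := sq_mul_two_mul_sub_sub_eq_of_cubic_root hroot hsq hum
  refine ⟨heq, heq ▸ ?_⟩
  have hsqrt : 0 < Real.sqrt Δ := Real.sqrt_pos.mpr hΔ
  have hgap : 0 < ustar - um := by linarith
  positivity

/-- if instead u* is the largest root, 0 < u*_- < u*_+ < u* < 1, then
(u*_-)²(2u*_- - T) - AM = u*_- √Δ (u* - u*_-) > 0. -/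
theorem stmt_17 (T L A M ustar : ℝ) (hA : 0 < A) (hM : M < 0)
    (hroot : ustar ^ 3 - T * ustar ^ 2 - L * ustar + A * M = 0)
    (Δ : ℝ) (hΔdef : Δ = (ustar - T) ^ 2 - 4 * (ustar * (ustar - T) - L)) (hΔ : 0 < Δ)
    (um up : ℝ)
    (hum : um = (T - ustar - Real.sqrt Δ) / 2)
    (hup : up = (T - ustar + Real.sqrt Δ) / 2)
    (h0 : 0 < um) (h1 : um < up) (h2 : up < ustar) (h3 : ustar < 1) :
    um ^ 2 * (2 * um - T) - A * M = um * Real.sqrt Δ * (ustar - um) ∧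
    0 < um ^ 2 * (2 * um - T) - A * M :=
  stmt_17_general T L A M ustar hroot Δ hΔdef hΔ um up hum h0 h1 h2
end

section
/- For the cubic g(u) = u^3 - T u^2 - L u + AM with T > 0, L < 0, if the double-root condition holds then the double root equals (T ± 2√(T²+3L))/3; substituting u = (T ± 2√(T²+3L))/3 into g(u) = 0 yields an equation determining the critical values Q = Q^±(A,M), and for A = 1/10, M = -1/10 these values are Q^± = (73 ± √5)/200. -/
/-! At a repeated root `u` of `g(u) = u³ - T u² - L u + c` both `g u` and `g' u` vanish, and
`u g'(u) - g(u) = 2u³ - T u² - c` no longer involves `L`. For `T = 4/5`, `c = -1/100` this cubic is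
`2 (u + 1/10) (u² - u/2 + 1/20)`, whose positive roots are `u = (5 ± √5)/20`; then `g' u = 0`
determines `L = 19/100 - Q`, giving `Q = (73 ± √5)/200`. -/

open Real

theorem cubic_double_root_iff {R : Type*} [CommRing R] (T L c u : R) :
    (u ^ 3 - T * u ^ 2 - L * u + c = 0 ∧ 3 * u ^ 2 - 2 * T * u - L = 0) ↔
      (2 * u ^ 3 - T * u ^ 2 - c = 0 ∧ L = 3 * u ^ 2 - 2 * T * u) := by
  constructor
  · rintro ⟨hg, hg'⟩
    exact ⟨by linear_combination u * hg' - hg, by linear_combination -hg'⟩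
  · rintro ⟨hu, rfl⟩
    exact ⟨by linear_combination -hu, by ring⟩

theorem pos_and_eliminant_eq_zero_iff (u : ℝ) :
    (0 < u ∧ 2 * u ^ 3 - 4 / 5 * u ^ 2 + 1 / 100 = 0) ↔
      u = (5 - √5) / 20 ∨ u = (5 + √5) / 20 := by
  have h5 : √5 ^ 2 = 5 := sq_sqrt (by norm_num)
  have h5_lt : √5 < 5 := by nlinarith [sqrt_nonneg 5]
  have hfactor : 2 * u ^ 3 - 4 / 5 * u ^ 2 + 1 / 100 =
      2 * (u + 1 / 10) * ((u - (5 - √5) / 20) * (u - (5 + √5) / 20)) := by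
    linear_combination ((u + 1 / 10) / 200) * h5
  rw [hfactor, mul_eq_zero, mul_eq_zero, mul_eq_zero, sub_eq_zero, sub_eq_zero]
  constructor
  · rintro ⟨hu, (h | h) | h⟩
    · norm_num at h
    · linarith
    · exact h
  · rintro (rfl | rfl)
    · exact ⟨by linarith, Or.inr (Or.inl rfl)⟩
    · exact ⟨by positivity, Or.inr (Or.inr rfl)⟩

theorem stmt_19_general (Q : ℝ)
    (g : ℝ → ℝ)
    (hg : ∀ u, g u = u ^ 3 - (4 / 5) * u ^ 2 - (19 / 100 - Q) * u - 1 / 100) :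
    (∃ u : ℝ, 0 < u ∧ g u = 0 ∧ 3 * u ^ 2 - (8 / 5) * u - (19 / 100 - Q) = 0) ↔
      Q = (73 - Real.sqrt 5) / 200 ∨ Q = (73 + Real.sqrt 5) / 200 := by
  have h5 : √5 ^ 2 = 5 := sq_sqrt (by norm_num)
  have hdouble (u : ℝ) := cubic_double_root_iff (4 / 5) (19 / 100 - Q) (-1 / 100) u
  constructor
  · rintro ⟨u, hu, hgu, hg'u⟩
    rw [hg] at hgu
    obtain ⟨hcubic, hL⟩ := (hdouble u).1
      ⟨by linear_combination hgu, by linear_combination hg'u⟩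
    rcases (pos_and_eliminant_eq_zero_iff u).1 ⟨hu, by linear_combination hcubic⟩ with rfl | rfl
    · left; linear_combination -hL - (3 / 400) * h5
    · right; linear_combination -hL - (3 / 400) * h5
  · intro hQ
    obtain ⟨u, hroot, hL⟩ : ∃ u, (u = (5 - √5) / 20 ∨ u = (5 + √5) / 20) ∧
        19 / 100 - Q = 3 * u ^ 2 - 2 * (4 / 5) * u := by
      rcases hQ with rfl | rfl
      · exact ⟨_, Or.inl rfl, by linear_combination (-3 / 400) * h5⟩
      · exact ⟨_, Or.inr rfl, by linear_combination (-3 / 400) * h5⟩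
    obtain ⟨hu, hcubic⟩ := (pos_and_eliminant_eq_zero_iff u).2 hroot
    obtain ⟨hgu, hg'u⟩ := (hdouble u).2 ⟨by linear_combination hcubic, hL⟩
    exact ⟨u, hu, by rw [hg]; linear_combination hgu, by linear_combination hg'u⟩

/-- for A = 1/10, M = -1/10, the cubic
g(u) = u³ - (4/5)u² - (19/100 - Q)u - 1/100 has a repeated positive root exactly when
Q = (73 - √5)/200 or Q = (73 + √5)/200. -/
theorem stmt_19 (Q : ℝ) (hQ : 0 < Q)
    (g : ℝ → ℝ)
    (hg : ∀ u, g u = u ^ 3 - (4 / 5) * u ^ 2 - (19 / 100 - Q) * u - 1 / 100) :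
    (∃ u : ℝ, 0 < u ∧ g u = 0 ∧ 3 * u ^ 2 - (8 / 5) * u - (19 / 100 - Q) = 0) ↔
      Q = (73 - Real.sqrt 5) / 200 ∨ Q = (73 + Real.sqrt 5) / 200 :=
  stmt_19_general Q g hg
end
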